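/- arXiv:1206.5120 — 2 statements merged into one kernel-verified Lean document; each statement's English description precedes it below -/
import Mathlib

section
/- Let G be a cycle graph with simple demand digraph H. If some arc of the directed version of G is contained in at least three routes, then there exist a partition of a nonatomic population into the sets I_ℓ and an assignment of strictly increasing, continuous, affine cost functions such that two Nash equilibria with distinct flows on some arc exist. -/
open scoped Classical
open MeasureTheory

/-- The positive (counterclockwise) route of the OD-pair `(o, d)` on the cycle with
vertex set `ZMod n` contains the positive arc at edge `v` (the arc from `v` to `v + 1`)
iff `posRoute n o d v` holds. -/
def posRoute (n : ℕ) (o d v : ZMod n) : Prop := (v - o).val < (d - o).val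

/-- The negative (clockwise) route of `(o, d)` contains the negative arc at edge `v`
(the arc from `v + 1` to `v`) iff `negRoute n o d v` holds. -/
def negRoute (n : ℕ) (o d v : ZMod n) : Prop := (v - d).val < (o - d).val

/-- An arc of the directed version of the cycle is a pair `(v, b)`: for `b = true` the
positive arc `v → v + 1`, for `b = false` the negative arc `v + 1 → v`.
`inRoute n o d b a` says that arc `a` lies on the route of direction `b` of the
OD-pair `(o, d)`. -/
def inRoute (n : ℕ) (o d : ZMod n) (b : Bool) (a : ZMod n × Bool) : Prop :=
  a.2 = b ∧ (if b then posRoute n o d a.1 else negRoute n o d a.1)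

/-- Flow induced on arc `a` by the strategy profile `σ` (`σ i = true` means that
user `i` chooses their positive route, `σ i = false` their negative route). -/
noncomputable def flow {I : Type} [MeasurableSpace I] (μ : Measure I) (n : ℕ)
    (od : I → ZMod n × ZMod n) (σ : I → Bool) (a : ZMod n × Bool) : ℝ :=
  (μ {i | inRoute n (od i).1 (od i).2 (σ i) a}).toReal

/-- The cost, for user `i`, of their route in direction `b`, given arc flows `f`:
the sum over the arcs of that route of the user-specific arc costs. -/
noncomputable def routeCost {I : Type} (n : ℕ) [NeZero n]
    (c : I → ZMod n × Bool → ℝ → ℝ) (f : ZMod n × Bool → ℝ)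
    (od : I → ZMod n × ZMod n) (i : I) (b : Bool) : ℝ :=
  ∑ a ∈ Finset.univ.filter (fun a : ZMod n × Bool => inRoute n (od i).1 (od i).2 b a),
    c i a (f a)

/-- `σ` is a Nash equilibrium: every user's chosen route is a minimal-cost route
given the induced flows. -/
def IsEquilibrium {I : Type} [MeasurableSpace I] (μ : Measure I) (n : ℕ) [NeZero n]
    (od : I → ZMod n × ZMod n) (c : I → ZMod n × Bool → ℝ → ℝ) (σ : I → Bool) : Prop :=
  ∀ (i : I) (b : Bool),
    routeCost n c (flow μ n od σ) od i (σ i) ≤ routeCost n c (flow μ n od σ) od i b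

open Finset
open scoped NNReal ENNReal

/-!
Three OD-pairs whose routes of one direction share an arc have pairwise different positive
routes. Take classes of users of masses `2, 2, 3` on them; in the first equilibrium the first two
classes use their negative and the third its positive route, in the second every class switches.
The shared arc then carries flow `3` in one profile and `4` in the other.

Affine costs make both profiles equilibria as soon as every class has a *favourable* arc, one on
which the flow change favours its switch: weighting that arc heavily makes the weighted flow
change favour the switch, and constant terms then balance the two routes. For the third class the
shared arc is favourable; for each of the first two, a vertex where the other of the two is the odd
one out among the three positive routes gives one (a flow of `2` against `3`). Of three different
routes at least two are somewhere the odd one out, so a suitable labelling exists.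
-/

namespace ZMod

lemma eq_zero_and_eq_of_forall_val_lt_iff {n : ℕ} [NeZero n] {x : ZMod n} {k k' : ℕ}
    (hk : k < n) (hk'₀ : 0 < k') (hk' : k' < n)
    (h : ∀ y : ZMod n, y.val < k ↔ (y - x).val < k') : x = 0 ∧ k = k' := by
  have : Fact (1 < n) := ⟨by omega⟩
  -- `x` lies in `[0, k)` but `x - 1` does not, although `(x - 1).val < x.val` unless `x = 0`.
  have hx : x = 0 := by
    by_contra hx
    have hxk : x.val < k := (h x).2 (by simpa using hk'₀)
    have h1x : (1 : ZMod n).val ≤ x.val := by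
      rw [val_one]; exact val_pos.2 hx
    have hpred : ¬ (x - 1 - x).val < k' := by
      rw [sub_sub_cancel_left, neg_val, if_neg one_ne_zero, val_one]; omega
    exact hpred ((h _).1 (by rw [val_sub h1x, val_one]; omega))
  subst hx
  simp only [sub_zero] at h
  have hkk' := h k
  have hk'k := h k'
  rw [val_natCast_of_lt hk] at hkk'
  rw [val_natCast_of_lt hk'] at hk'k
  exact ⟨rfl, by omega⟩

end ZMod

section Routes

variable {n : ℕ} [NeZero n]

lemma negRoute_iff_not_posRoute {o d : ZMod n} (h : o ≠ d) (u : ZMod n) :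
    negRoute n o d u ↔ ¬ posRoute n o d u := by
  have hdo : d - o ≠ 0 := sub_ne_zero.2 h.symm
  have hod : (o - d).val = n - (d - o).val := by
    rw [← neg_sub, ZMod.neg_val, if_neg hdo]
  have hdo_lt := (d - o).val_lt
  have huo_lt := (u - o).val_lt
  have hdo_pos : 0 < (d - o).val := ZMod.val_pos.2 hdo
  unfold negRoute posRoute
  rw [hod]
  rcases lt_or_ge (u - o).val (d - o).val with hlt | hge
  · have : u - d = (u - o) + (o - d) := by ring
    rw [this, ZMod.val_add_of_lt (by omega), hod]
    omega
  · have : u - d = (u - o) - (d - o) := by ring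
    rw [this, ZMod.val_sub hge]
    omega

lemma inRoute_iff_posRoute {o d : ZMod n} (h : o ≠ d) (b b' : Bool) (u : ZMod n) :
    inRoute n o d b (u, b') ↔ b' = b ∧ (posRoute n o d u ↔ b = true) := by
  cases b <;> simp [inRoute, negRoute_iff_not_posRoute h]

lemma eq_of_posRoute_iff {o d o' d' : ZMod n} (h' : o' ≠ d')
    (hP : ∀ u, posRoute n o d u ↔ posRoute n o' d' u) : o = o' ∧ d = d' := by
  obtain ⟨hx, hk⟩ := ZMod.eq_zero_and_eq_of_forall_val_lt_iff (x := o' - o)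
    (d - o).val_lt (ZMod.val_pos.2 (sub_ne_zero.2 h'.symm)) (d' - o').val_lt fun y => by
      rw [show y - (o' - o) = y + o - o' by ring]
      simpa [posRoute] using hP (y + o)
  obtain rfl : o = o' := (sub_eq_zero.1 hx).symm
  exact ⟨rfl, sub_left_injective (ZMod.val_injective n hk)⟩

lemma exists_not_posRoute_iff_of_ne {ℓ ℓ' : ZMod n × ZMod n} (h' : ℓ'.1 ≠ ℓ'.2) (hne : ℓ ≠ ℓ') :
    ∃ u, ¬(posRoute n ℓ.1 ℓ.2 u ↔ posRoute n ℓ'.1 ℓ'.2 u) := by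
  by_contra! h
  exact hne (Prod.ext_iff.2 (eq_of_posRoute_iff h' h))

noncomputable def routeArcs (n : ℕ) [NeZero n] (o d : ZMod n) (b : Bool) : Finset (ZMod n × Bool) :=
  univ.filter (inRoute n o d b)

@[simp]
lemma mem_routeArcs {o d : ZMod n} {b : Bool} {a : ZMod n × Bool} :
    a ∈ routeArcs n o d b ↔ inRoute n o d b a := by
  simp [routeArcs]

lemma disjoint_routeArcs_not (o d : ZMod n) (b : Bool) :
    Disjoint (routeArcs n o d b) (routeArcs n o d (!b)) := by
  rw [Finset.disjoint_left]
  intro a ha ha'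
  simp only [mem_routeArcs, inRoute] at ha ha'
  cases b <;> simp_all

lemma routeArcs_nonempty {o d : ZMod n} (h : o ≠ d) (b : Bool) : (routeArcs n o d b).Nonempty := by
  refine ⟨(if b then o else d, b), ?_⟩
  cases b <;> simp [routeArcs, inRoute, posRoute, negRoute, ZMod.val_pos, sub_eq_zero, h, Ne.symm h]

lemma isEquilibrium_iff {I : Type} [MeasurableSpace I] (μ : Measure I)
    (od : I → ZMod n × ZMod n) (c : I → ZMod n × Bool → ℝ → ℝ) (σ : I → Bool) :
    IsEquilibrium μ n od c σ ↔ ∀ i, routeCost n c (flow μ n od σ) od i (σ i) ≤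
      routeCost n c (flow μ n od σ) od i (!σ i) := by
  refine ⟨fun h i => h i _, fun h i b => ?_⟩
  rcases Bool.eq_or_eq_not b (σ i) with rfl | rfl
  exacts [le_rfl, h i]

end Routes

section AffineCosts

variable {A : Type*}

lemma exists_pos_weights_sum_mul_nonneg {T : Finset A} {g : A → ℝ} {a₀ : A} (ha₀T : a₀ ∈ T)
    (ha₀ : 0 < g a₀) : ∃ α : A → ℝ, (∀ a, 0 < α a) ∧ 0 ≤ ∑ a ∈ T, α a * g a := by
  set K := (∑ a ∈ T, |g a|) / g a₀
  refine ⟨fun a => 1 + if a = a₀ then K else 0, fun a => by positivity, ?_⟩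
  have hK : K * g a₀ = ∑ a ∈ T, |g a| := div_mul_cancel₀ _ ha₀.ne'
  have habs : ∑ a ∈ T, -g a ≤ ∑ a ∈ T, |g a| := sum_le_sum fun a _ => neg_le_abs (g a)
  simp only [add_mul, one_mul, ite_mul, zero_mul, sum_add_distrib, sum_ite_eq', if_pos ha₀T, hK]
  linarith [sum_neg_distrib (s := T) (f := g)]

lemma exists_pos_weights_sum_mul_le {R S : Finset A} (hRS : Disjoint R S) {g : A → ℝ}
    (hfav : ∃ a, (a ∈ S ∧ 0 < g a) ∨ (a ∈ R ∧ g a < 0)) :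
    ∃ α : A → ℝ, (∀ a, 0 < α a) ∧ ∑ a ∈ R, α a * g a ≤ ∑ a ∈ S, α a * g a := by
  set g' : A → ℝ := fun a => if a ∈ S then g a else -g a
  obtain ⟨a₀, ha₀⟩ := hfav
  have hR : ∀ a ∈ R, g' a = -g a := fun a ha => if_neg (disjoint_left.1 hRS ha)
  have hS : ∀ a ∈ S, g' a = g a := fun a ha => if_pos ha
  obtain ⟨α, hα, hsum⟩ := exists_pos_weights_sum_mul_nonneg (T := R ∪ S) (g := g') (a₀ := a₀)
    (by rcases ha₀ with ⟨h, -⟩ | ⟨h, -⟩ <;> simp [h])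
    (by rcases ha₀ with ⟨h, h'⟩ | ⟨h, h'⟩ <;> simp only [hR, hS, h] <;> linarith)
  have hsumR : ∑ a ∈ R, α a * g' a = -∑ a ∈ R, α a * g a := by
    rw [← sum_neg_distrib]; exact sum_congr rfl fun a ha => by rw [hR a ha, mul_neg]
  have hsumS : ∑ a ∈ S, α a * g' a = ∑ a ∈ S, α a * g a :=
    sum_congr rfl fun a ha => by rw [hS a ha]
  rw [sum_union hRS, hsumR, hsumS] at hsum
  exact ⟨α, hα, by linarith⟩

lemma exists_nonneg_sum_sub_sum_eq {R S : Finset A} (hRS : Disjoint R S) (hR : R.Nonempty)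
    (hS : S.Nonempty) (B : ℝ) :
    ∃ β : A → ℝ, (∀ a, 0 ≤ β a) ∧ ∑ a ∈ R, β a - ∑ a ∈ S, β a = B := by
  obtain ⟨r, hr⟩ := hR
  obtain ⟨s, hs⟩ := hS
  refine ⟨Pi.single r (max B 0) + Pi.single s (max (-B) 0), fun a => ?_, ?_⟩
  · simp only [Pi.add_apply, Pi.single_apply]
    positivity
  · simp only [Pi.add_apply, sum_add_distrib, sum_pi_single', hr, hs,
      disjoint_left.1 hRS hr, disjoint_right.1 hRS hs, if_true, if_false]
    rcases le_total B 0 with h | h <;> simp [h]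

lemma exists_affine_costs {R S : Finset A} (hRS : Disjoint R S) (hR : R.Nonempty)
    (hS : S.Nonempty) {f f' : A → ℝ}
    (hfav : ∃ a, (a ∈ S ∧ f' a < f a) ∨ (a ∈ R ∧ f a < f' a)) :
    ∃ c : A → ℝ → ℝ, (∀ a, ∃ α β : ℝ, 0 < α ∧ 0 ≤ β ∧ ∀ x, c a x = α * x + β) ∧
      ∑ a ∈ R, c a (f a) ≤ ∑ a ∈ S, c a (f a) ∧
      ∑ a ∈ S, c a (f' a) ≤ ∑ a ∈ R, c a (f' a) := by
  obtain ⟨α, hα, hαle⟩ := exists_pos_weights_sum_mul_le hRS (g := f - f') (by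
    obtain ⟨a, h⟩ := hfav
    exact ⟨a, by simpa only [Pi.sub_apply, sub_pos, sub_neg] using h⟩)
  obtain ⟨β, hβ, hβsum⟩ := exists_nonneg_sum_sub_sum_eq hRS hR hS
    (∑ a ∈ S, α a * f a - ∑ a ∈ R, α a * f a)
  refine ⟨fun a x => α a * x + β a, fun a => ⟨α a, β a, hα a, hβ a, fun x => rfl⟩, ?_, ?_⟩
  all_goals
    simp only [Pi.sub_apply, mul_sub, sum_sub_distrib, sum_add_distrib] at hαle ⊢
    linarith

end AffineCosts

section ClassPopulation

variable {ι : Type} [Fintype ι]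

/-- User `(k, x)` belongs to class `k`, of mass `w k`; the unit interval makes the population
nonatomic. -/
noncomputable def classPopulation [MeasurableSpace ι] (w : ι → ℝ≥0) :
    Measure (ι × unitInterval) :=
  (∑ k, (w k : ℝ≥0∞) • Measure.dirac k).prod volume

noncomputable def classFlow (n : ℕ) [NeZero n] (w : ι → ℝ≥0) (ℓ : ι → ZMod n × ZMod n)
    (s : ι → Bool) (a : ZMod n × Bool) : ℝ :=
  ∑ k ∈ univ.filter (fun k => inRoute n (ℓ k).1 (ℓ k).2 (s k) a), (w k : ℝ)

variable {n : ℕ} [NeZero n]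

lemma classFlow_apply {w : ι → ℝ≥0} {ℓ : ι → ZMod n × ZMod n} (hℓ : ∀ k, (ℓ k).1 ≠ (ℓ k).2)
    (s : ι → Bool) (u : ZMod n) (b : Bool) :
    classFlow n w ℓ s (u, b) =
      ∑ k, if b = s k ∧ (posRoute n (ℓ k).1 (ℓ k).2 u ↔ s k = true) then (w k : ℝ) else 0 := by
  rw [classFlow, sum_filter]
  simp only [inRoute_iff_posRoute (hℓ _)]

variable [MeasurableSpace ι] [MeasurableSingletonClass ι]

lemma classPopulation_preimage_fst (w : ι → ℝ≥0) (s : Finset ι) :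
    classPopulation w (Prod.fst ⁻¹' s) = ∑ k ∈ s, (w k : ℝ≥0∞) := by
  rw [classPopulation, ← Set.prod_univ, Measure.prod_prod, measure_univ, mul_one]
  simp [Measure.dirac_apply, Set.indicator_apply]

instance (w : ι → ℝ≥0) : IsFiniteMeasure (classPopulation w) where
  measure_univ_lt_top := by
    simpa using (classPopulation_preimage_fst w univ).trans_lt
      (ENNReal.sum_lt_top.2 fun _ _ => ENNReal.coe_lt_top)

instance (w : ι → ℝ≥0) : NullSingletonClass (classPopulation w) where
  measure_singleton x := by
    rw [classPopulation, ← Set.singleton_prod_singleton, Measure.prod_prod, measure_singleton x.2,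
      mul_zero]

lemma flow_classPopulation (w : ι → ℝ≥0) (ℓ : ι → ZMod n × ZMod n) (s : ι → Bool) :
    flow (classPopulation w) n (fun i => ℓ i.1) (fun i => s i.1) = classFlow n w ℓ s := by
  ext a
  have hset : {i : ι × unitInterval | inRoute n (ℓ i.1).1 (ℓ i.1).2 (s i.1) a} =
      Prod.fst ⁻¹' ↑(univ.filter fun k => inRoute n (ℓ k).1 (ℓ k).2 (s k) a) := by
    ext; simp
  rw [flow, hset, classPopulation_preimage_fst, classFlow]
  norm_cast

end ClassPopulation

def AdmitsDistinctEquilibria (n : ℕ) [NeZero n] (L : Finset (ZMod n × ZMod n)) : Prop :=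
  ∃ (I : Type) (m : MeasurableSpace I) (μ : @Measure I m),
    @IsFiniteMeasure I m μ ∧ @NullSingletonClass I m μ ∧
    ∃ (od : I → ZMod n × ZMod n) (c : I → ZMod n × Bool → ℝ → ℝ) (σ σ' : I → Bool),
      (∀ i, od i ∈ L) ∧
      (∀ i a, ∃ α β : ℝ, 0 < α ∧ 0 ≤ β ∧ ∀ x, c i a x = α * x + β) ∧
      (∀ a, @MeasurableSet I m {i | inRoute n (od i).1 (od i).2 (σ i) a}) ∧
      (∀ a, @MeasurableSet I m {i | inRoute n (od i).1 (od i).2 (σ' i) a}) ∧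
      @IsEquilibrium I m μ n _ od c σ ∧ @IsEquilibrium I m μ n _ od c σ' ∧
      ∃ a : ZMod n × Bool, @flow I m μ n od σ a ≠ @flow I m μ n od σ' a

theorem admitsDistinctEquilibria_of_classes {n : ℕ} [NeZero n] {L : Finset (ZMod n × ZMod n)}
    {ι : Type} [Fintype ι] [MeasurableSpace ι] [MeasurableSingletonClass ι] (w : ι → ℝ≥0)
    (ℓ : ι → ZMod n × ZMod n) (hℓL : ∀ k, ℓ k ∈ L) (hℓ : ∀ k, (ℓ k).1 ≠ (ℓ k).2) (s : ι → Bool)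
    (hfav : ∀ k, ∃ a,
      (a ∈ routeArcs n (ℓ k).1 (ℓ k).2 (!s k) ∧
        classFlow n w ℓ (fun k => !s k) a < classFlow n w ℓ s a) ∨
      (a ∈ routeArcs n (ℓ k).1 (ℓ k).2 (s k) ∧
        classFlow n w ℓ s a < classFlow n w ℓ (fun k => !s k) a))
    (hne : ∃ a, classFlow n w ℓ s a ≠ classFlow n w ℓ (fun k => !s k) a) :
    AdmitsDistinctEquilibria n L := by
  choose c hc using fun k => exists_affine_costs (disjoint_routeArcs_not _ _ (s k))
    (routeArcs_nonempty (hℓ k) _) (routeArcs_nonempty (hℓ k) _) (hfav k)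
  have hmeas : ∀ (σ : ι → Bool) a, MeasurableSet
      {i : ι × unitInterval | inRoute n (ℓ i.1).1 (ℓ i.1).2 (σ i.1) a} :=
    fun σ a => measurable_fst (Set.toFinite {k | inRoute n (ℓ k).1 (ℓ k).2 (σ k) a}).measurableSet
  refine ⟨ι × unitInterval, inferInstance, classPopulation w, inferInstance,
    (inferInstance : NullSingletonClass _), fun i => ℓ i.1, fun i => c i.1, fun i => s i.1,
    fun i => !s i.1, fun i => hℓL i.1, fun i => (hc i.1).1, hmeas _, hmeas (fun k => !s k),
    ?_, ?_, ?_⟩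
  · rw [isEquilibrium_iff, flow_classPopulation]
    exact fun i => (hc i.1).2.1
  · rw [isEquilibrium_iff, flow_classPopulation w ℓ (fun k => !s k)]
    intro i
    rw [Bool.not_not]
    exact (hc i.1).2.2
  · obtain ⟨a, ha⟩ := hne
    exact ⟨a, by rwa [flow_classPopulation, flow_classPopulation w ℓ (fun k => !s k)]⟩

section OddOneOut

variable {X : Type*} {p q r : X → Prop}

def IsOddOneOut (p q r : X → Prop) : Prop := ∃ x, (q x ↔ r x) ∧ ¬(p x ↔ q x)

lemma IsOddOneOut.swap (h : IsOddOneOut p q r) : IsOddOneOut p r q := by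
  obtain ⟨x, hqr, hpq⟩ := h
  exact ⟨x, hqr.symm, fun hpr => hpq (hpr.trans hqr.symm)⟩

lemma isOddOneOut_or_isOddOneOut (hpq : ∃ x, ¬(p x ↔ q x)) (r : X → Prop) :
    IsOddOneOut p q r ∨ IsOddOneOut q p r := by
  obtain ⟨x, hx⟩ := hpq
  by_cases hqr : q x ↔ r x
  · exact .inl ⟨x, hqr, hx⟩
  · exact .inr ⟨x, by tauto, by tauto⟩

lemma isOddOneOut_two_of_three (hpq : ∃ x, ¬(p x ↔ q x)) (hpr : ∃ x, ¬(p x ↔ r x))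
    (hqr : ∃ x, ¬(q x ↔ r x)) :
    (IsOddOneOut p q r ∧ IsOddOneOut q p r) ∨ (IsOddOneOut p r q ∧ IsOddOneOut r p q) ∨
      (IsOddOneOut q r p ∧ IsOddOneOut r q p) := by
  have := isOddOneOut_or_isOddOneOut hpq r
  have := isOddOneOut_or_isOddOneOut hpr q
  have := isOddOneOut_or_isOddOneOut hqr p
  have := @IsOddOneOut.swap _ p q r
  have := @IsOddOneOut.swap _ p r q
  have := @IsOddOneOut.swap _ q p r
  have := @IsOddOneOut.swap _ q r p
  have := @IsOddOneOut.swap _ r p q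
  have := @IsOddOneOut.swap _ r q p
  tauto

end OddOneOut

theorem admitsDistinctEquilibria_of_isOddOneOut {n : ℕ} [NeZero n] {L : Finset (ZMod n × ZMod n)}
    (hL : ∀ ℓ ∈ L, ℓ.1 ≠ ℓ.2) {ℓ₁ ℓ₂ ℓ₃ : ZMod n × ZMod n} (h₁L : ℓ₁ ∈ L) (h₂L : ℓ₂ ∈ L)
    (h₃L : ℓ₃ ∈ L) {v : ZMod n} {t : Bool}
    (hv₁ : inRoute n ℓ₁.1 ℓ₁.2 t (v, t)) (hv₂ : inRoute n ℓ₂.1 ℓ₂.2 t (v, t))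
    (hv₃ : inRoute n ℓ₃.1 ℓ₃.2 t (v, t))
    (hodd₁ : IsOddOneOut (posRoute n ℓ₁.1 ℓ₁.2) (posRoute n ℓ₂.1 ℓ₂.2) (posRoute n ℓ₃.1 ℓ₃.2))
    (hodd₂ : IsOddOneOut (posRoute n ℓ₂.1 ℓ₂.2) (posRoute n ℓ₁.1 ℓ₁.2) (posRoute n ℓ₃.1 ℓ₃.2)) :
    AdmitsDistinctEquilibria n L := by
  have hℓL : ∀ k, ![ℓ₁, ℓ₂, ℓ₃] k ∈ L := by
    intro k; fin_cases k <;> assumption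
  have hℓ : ∀ k, (![ℓ₁, ℓ₂, ℓ₃] k).1 ≠ (![ℓ₁, ℓ₂, ℓ₃] k).2 := fun k => hL _ (hℓL k)
  have h₁ := hL _ h₁L
  have h₂ := hL _ h₂L
  have h₃ := hL _ h₃L
  rw [inRoute_iff_posRoute h₁] at hv₁
  rw [inRoute_iff_posRoute h₂] at hv₂
  rw [inRoute_iff_posRoute h₃] at hv₃
  refine admitsDistinctEquilibria_of_classes ![2, 2, 3] ![ℓ₁, ℓ₂, ℓ₃]
    hℓL hℓ ![false, false, true] ?_ ?_
  · intro k
    fin_cases k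
    · obtain ⟨u, h₁₃, h₂₁⟩ := hodd₂
      refine ⟨(u, decide (posRoute n ℓ₁.1 ℓ₁.2 u)), ?_⟩
      by_cases p₁ : posRoute n ℓ₁.1 ℓ₁.2 u <;> by_cases p₂ : posRoute n ℓ₂.1 ℓ₂.2 u <;>
        by_cases p₃ : posRoute n ℓ₃.1 ℓ₃.2 u <;>
        simp [classFlow_apply hℓ, Fin.sum_univ_three, inRoute_iff_posRoute h₁, p₁, p₂, p₃]
          at h₁₃ h₂₁ ⊢ <;>
        norm_num
    · obtain ⟨u, h₂₃, h₁₂⟩ := hodd₁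
      refine ⟨(u, decide (posRoute n ℓ₂.1 ℓ₂.2 u)), ?_⟩
      by_cases p₁ : posRoute n ℓ₁.1 ℓ₁.2 u <;> by_cases p₂ : posRoute n ℓ₂.1 ℓ₂.2 u <;>
        by_cases p₃ : posRoute n ℓ₃.1 ℓ₃.2 u <;>
        simp [classFlow_apply hℓ, Fin.sum_univ_three, inRoute_iff_posRoute h₂, p₁, p₂, p₃]
          at h₂₃ h₁₂ ⊢ <;>
        norm_num
    · refine ⟨(v, t), ?_⟩
      cases t <;>
        simp [classFlow_apply hℓ, Fin.sum_univ_three, inRoute_iff_posRoute h₃, hv₁, hv₂, hv₃] <;>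
        norm_num
  · refine ⟨(v, t), ?_⟩
    cases t <;> simp [classFlow_apply hℓ, Fin.sum_univ_three, hv₁, hv₂, hv₃] <;> norm_num

theorem nonuniqueness_of_three_routes_general (n : ℕ) [NeZero n]
    (L : Finset (ZMod n × ZMod n)) (hL : ∀ ℓ ∈ L, ℓ.1 ≠ ℓ.2)
    (hthree : ∃ a : ZMod n × Bool,
      3 ≤ (L.filter (fun ℓ => inRoute n ℓ.1 ℓ.2 a.2 a)).card) :
    ∃ (I : Type) (m : MeasurableSpace I) (μ : @Measure I m),
      @IsFiniteMeasure I m μ ∧ @NoAtoms I m μ ∧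
      ∃ (od : I → ZMod n × ZMod n) (c : I → ZMod n × Bool → ℝ → ℝ) (σ σ' : I → Bool),
        (∀ i, od i ∈ L) ∧
        (∀ i a, ∃ α β : ℝ, 0 < α ∧ 0 ≤ β ∧ ∀ x, c i a x = α * x + β) ∧
        (∀ a, @MeasurableSet I m {i | inRoute n (od i).1 (od i).2 (σ i) a}) ∧
        (∀ a, @MeasurableSet I m {i | inRoute n (od i).1 (od i).2 (σ' i) a}) ∧
        @IsEquilibrium I m μ n _ od c σ ∧ @IsEquilibrium I m μ n _ od c σ' ∧
        ∃ a : ZMod n × Bool, @flow I m μ n od σ a ≠ @flow I m μ n od σ' a := by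
  obtain ⟨⟨v, t⟩, hcard⟩ := hthree
  obtain ⟨ℓ₁, h₁, ℓ₂, h₂, ℓ₃, h₃, h₁₂, h₁₃, h₂₃⟩ := two_lt_card.1 hcard
  rw [mem_filter] at h₁ h₂ h₃
  rcases isOddOneOut_two_of_three (exists_not_posRoute_iff_of_ne (hL _ h₂.1) h₁₂)
      (exists_not_posRoute_iff_of_ne (hL _ h₃.1) h₁₃)
      (exists_not_posRoute_iff_of_ne (hL _ h₃.1) h₂₃) with ⟨o₁, o₂⟩ | ⟨o₁, o₃⟩ | ⟨o₂, o₃⟩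
  · exact admitsDistinctEquilibria_of_isOddOneOut hL h₁.1 h₂.1 h₃.1 h₁.2 h₂.2 h₃.2 o₁ o₂
  · exact admitsDistinctEquilibria_of_isOddOneOut hL h₁.1 h₃.1 h₂.1 h₁.2 h₃.2 h₂.2 o₁ o₃
  · exact admitsDistinctEquilibria_of_isOddOneOut hL h₂.1 h₃.1 h₁.1 h₂.2 h₃.2 h₁.2 o₂ o₃

/-- If some arc of the directed version of the cycle is contained in
at least three routes, then there are a nonatomic population, a partition into the
sets `I_ℓ` (given by the map `od`), and strictly increasing continuous affine cost
functions admitting two Nash equilibria with distinct flows on some arc. -/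
theorem nonuniqueness_of_three_routes (n : ℕ) [NeZero n] (hn : 3 ≤ n)
    (L : Finset (ZMod n × ZMod n)) (hL : ∀ ℓ ∈ L, ℓ.1 ≠ ℓ.2)
    (hthree : ∃ a : ZMod n × Bool,
      3 ≤ (L.filter (fun ℓ => inRoute n ℓ.1 ℓ.2 a.2 a)).card) :
    ∃ (I : Type) (m : MeasurableSpace I) (μ : @Measure I m),
      @IsFiniteMeasure I m μ ∧ @NoAtoms I m μ ∧
      ∃ (od : I → ZMod n × ZMod n) (c : I → ZMod n × Bool → ℝ → ℝ) (σ σ' : I → Bool),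
        (∀ i, od i ∈ L) ∧
        (∀ i a, ∃ α β : ℝ, 0 < α ∧ 0 ≤ β ∧ ∀ x, c i a x = α * x + β) ∧
        (∀ a, @MeasurableSet I m {i | inRoute n (od i).1 (od i).2 (σ i) a}) ∧
        (∀ a, @MeasurableSet I m {i | inRoute n (od i).1 (od i).2 (σ' i) a}) ∧
        @IsEquilibrium I m μ n _ od c σ ∧ @IsEquilibrium I m μ n _ od c σ' ∧
        ∃ a : ZMod n × Bool, @flow I m μ n od σ a ≠ @flow I m μ n od σ' a :=
  nonuniqueness_of_three_routes_general n L hL hthree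
end

section
/- Let G be a cycle graph and H a simple demand digraph on its vertices. The pair (G, H) has the uniqueness property (for every partition of a nonatomic population and every assignment of strictly increasing continuous cost functions, all Nash equilibria induce the same arc flows) if and only if each arc of the directed version of G is contained in at most two routes. -/
/-!
If every arc lies on at most two routes, compare two equilibria `σ`, `σ'` through the net mass
`t ℓ` of OD pair `ℓ` that moves onto its positive route. The signed change of flow on an arc is
the sum of `t` over the at most two pairs routed through it. Looking at the pairs of maximal
`|t|`, either all these sums vanish, or some pair `ℓ` with `t ℓ ≠ 0` sees the flow on each of
its arcs change with the sign of `t ℓ`, strictly somewhere. A user of `ℓ` who switched routes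
then finds its new route dearer and its old one cheaper, one of them strictly, which
contradicts both profiles being equilibria.

Conversely, if three routes share an arc `s`, their side patterns are distinct, so one of them,
`p`, agrees with `q` on an edge `u` where `r` differs, and with `r` on an edge `w` where `q`
differs. Give users of `p, q, r` the masses `3, 2, 2` and costs dominated by a steep sigmoid on
one special arc each (`s`, `u` and `w`, in the direction `p` uses). Then sending `p` through
`s` and `q, r` the other way, and the opposite profile, are both equilibria, with flow `3`
respectively `4` on `s`.
-/

open scoped Classical
open MeasureTheory

/-- The pair `(G, H)` (cycle on `ZMod n`, demand digraph with arc set `L`) has the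
uniqueness property: for every nonatomic population partitioned according to its
OD-pairs and every assignment of strictly increasing continuous nonnegative
user-specific cost functions, all Nash equilibria induce the same arc flows. -/
def UniquenessProperty (n : ℕ) [NeZero n] (L : Finset (ZMod n × ZMod n)) : Prop :=
  ∀ (I : Type) (m : MeasurableSpace I) (μ : @Measure I m),
    @IsFiniteMeasure I m μ →
    ∀ od : I → ZMod n × ZMod n, (∀ i, od i ∈ L) →
    ∀ c : I → ZMod n × Bool → ℝ → ℝ,
      (∀ i a, StrictMono (c i a)) → (∀ i a, Continuous (c i a)) →
      (∀ i a x, 0 ≤ c i a x) →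
    ∀ σ σ' : I → Bool,
      (∀ a, @MeasurableSet I m {i | inRoute n (od i).1 (od i).2 (σ i) a}) →
      (∀ a, @MeasurableSet I m {i | inRoute n (od i).1 (od i).2 (σ' i) a}) →
      @IsEquilibrium I m μ n _ od c σ → @IsEquilibrium I m μ n _ od c σ' →
      ∀ a : ZMod n × Bool, @flow I m μ n od σ a = @flow I m μ n od σ' a

open Finset

section SignedClassSums

variable {ι A : Type*} [DecidableEq ι] {t : ι → ℝ} {F : Finset ι}

lemma mul_sum_nonneg_of_card_le_two (hF : #F ≤ 2) {x : ι} (hx : x ∈ F)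
    (hmax : ∀ y ∈ F, |t y| ≤ |t x|) : 0 ≤ t x * ∑ y ∈ F, t y := by
  rw [← add_sum_erase F t hx]
  have hrest : |∑ y ∈ F.erase x, t y| ≤ |t x| := by
    have hcard : #(F.erase x) ≤ 1 := by rw [card_erase_of_mem hx]; omega
    calc |∑ y ∈ F.erase x, t y| ≤ ∑ y ∈ F.erase x, |t y| := abs_sum_le_sum_abs _ _
      _ ≤ #(F.erase x) • |t x| := sum_le_card_nsmul _ _ _ fun y hy => hmax y (mem_of_mem_erase hy)
      _ ≤ 1 • |t x| := nsmul_le_nsmul_left (abs_nonneg _) hcard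
      _ = |t x| := one_nsmul _
  have : |t x * ∑ y ∈ F.erase x, t y| ≤ |t x| * |t x| := by
    rw [abs_mul]; exact mul_le_mul_of_nonneg_left hrest (abs_nonneg _)
  nlinarith [neg_abs_le (t x * ∑ y ∈ F.erase x, t y), abs_mul_abs_self (t x)]

lemma abs_eq_abs_of_sum_eq_zero_of_card_le_two (hF : #F ≤ 2) (hsum : ∑ y ∈ F, t y = 0)
    {x y : ι} (hx : x ∈ F) (hy : y ∈ F) : |t y| = |t x| := by
  obtain rfl | hxy := eq_or_ne x y
  · rfl
  have hpair : F = {x, y} :=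
    (eq_of_subset_of_card_le (insert_subset hx (singleton_subset_iff.mpr hy))
      (by rw [card_pair hxy]; exact hF)).symm
  rw [hpair, sum_pair hxy, add_eq_zero_iff_eq_neg'] at hsum
  rw [hsum, abs_neg]

lemma sum_filter_sdiff_eq_of_sum_eq_zero (P : ι → A → Prop) [DecidableRel P] {S B : Finset ι}
    (hS : ∀ a, #{ℓ ∈ S | P ℓ a} ≤ 2) (hBS : B ⊆ S)
    (hB : ∀ ℓ ∈ B, ∀ y ∈ S, |t y| = |t ℓ| → y ∈ B)
    (hzero : ∀ ℓ ∈ B, ∀ a, P ℓ a → ∑ ℓ' ∈ S with P ℓ' a, t ℓ' = 0) (a : A) :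
    ∑ ℓ ∈ S \ B with P ℓ a, t ℓ = ∑ ℓ ∈ S with P ℓ a, t ℓ := by
  have hB_sum : ∑ ℓ ∈ B with P ℓ a, t ℓ = 0 := by
    by_cases h : ∃ ℓ ∈ B, P ℓ a
    · obtain ⟨ℓ, hℓ, ha⟩ := h
      have hclass : {ℓ' ∈ B | P ℓ' a} = {ℓ' ∈ S | P ℓ' a} := by
        refine (filter_subset_filter _ hBS).antisymm fun y hy => ?_
        obtain ⟨hyS, hya⟩ := mem_filter.mp hy
        exact mem_filter.mpr ⟨hB ℓ hℓ y hyS (abs_eq_abs_of_sum_eq_zero_of_card_le_two (hS a)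
          (hzero ℓ hℓ a ha) (mem_filter.mpr ⟨hBS hℓ, ha⟩) hy), hya⟩
      rw [hclass]; exact hzero ℓ hℓ a ha
    · push Not at h
      rw [filter_false_of_mem h, sum_empty]
  rw [sum_filter, sum_filter, ← sum_sdiff hBS, ← sum_filter (s := B), hB_sum, add_zero]

/- By strong induction on `S`: the indices of maximal `|t|` either provide the witness, or every
class they meet cancels, so that removing them changes no class sum. -/
theorem sum_eq_zero_or_exists_signed (P : ι → A → Prop) [DecidableRel P] (t : ι → ℝ)
    (S : Finset ι) (hS : ∀ a, #{ℓ ∈ S | P ℓ a} ≤ 2) :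
    (∀ a, ∑ ℓ ∈ S with P ℓ a, t ℓ = 0) ∨
      ∃ ℓ ∈ S, (∀ a, P ℓ a → 0 ≤ t ℓ * ∑ ℓ' ∈ S with P ℓ' a, t ℓ') ∧
        ∃ a, P ℓ a ∧ 0 < t ℓ * ∑ ℓ' ∈ S with P ℓ' a, t ℓ' := by
  induction S using Finset.strongInduction with
  | H S ih =>
  rcases S.eq_empty_or_nonempty with rfl | hne
  · simp
  obtain ⟨ℓ₀, hℓ₀, hmax⟩ := S.exists_max_image (|t ·|) hne
  set B := {ℓ ∈ S | |t ℓ| = |t ℓ₀|}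
  have hBS : B ⊆ S := filter_subset _ S
  have hB_nonneg : ∀ ℓ ∈ B, ∀ a, P ℓ a → 0 ≤ t ℓ * ∑ ℓ' ∈ S with P ℓ' a, t ℓ' := by
    intro ℓ hℓ a ha
    rw [mem_filter] at hℓ
    exact mul_sum_nonneg_of_card_le_two (hS a) (mem_filter.mpr ⟨hℓ.1, ha⟩)
      fun y hy => hℓ.2 ▸ hmax y (mem_filter.mp hy).1
  by_cases hwit : ∃ ℓ ∈ B, ∃ a, P ℓ a ∧ ∑ ℓ' ∈ S with P ℓ' a, t ℓ' ≠ 0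
  · obtain ⟨ℓ, hℓ, a, ha, hsum⟩ := hwit
    obtain ⟨y, hy, hty⟩ := exists_ne_zero_of_sum_ne_zero hsum
    have htℓ : t ℓ ≠ 0 := by
      rw [← abs_pos, (mem_filter.mp hℓ).2]
      exact (abs_pos.mpr hty).trans_le (hmax y (mem_filter.mp hy).1)
    exact Or.inr ⟨ℓ, hBS hℓ, hB_nonneg ℓ hℓ, a, ha,
      (hB_nonneg ℓ hℓ a ha).lt_of_ne (mul_ne_zero htℓ hsum).symm⟩
  push Not at hwit
  have hsame := sum_filter_sdiff_eq_of_sum_eq_zero P hS hBS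
    (fun ℓ hℓ y hy hty => mem_filter.mpr ⟨hy, hty.trans (mem_filter.mp hℓ).2⟩) hwit
  have hsub : S \ B ⊂ S := sdiff_ssubset hBS ⟨ℓ₀, mem_filter.mpr ⟨hℓ₀, rfl⟩⟩
  rcases ih _ hsub fun a => (card_le_card (filter_subset_filter _ sdiff_subset)).trans (hS a)
    with h | ⟨ℓ, hℓ, hnonneg, a, ha, hpos⟩
  · exact Or.inl fun a => hsame a ▸ h a
  · exact Or.inr ⟨ℓ, (mem_sdiff.mp hℓ).1, fun a ha => hsame a ▸ hnonneg a ha, a, ha,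
      hsame a ▸ hpos⟩

end SignedClassSums

lemma exists_pivot {ι V : Type*} (F : ι → V → Bool) {T : Finset ι} (hT : 2 < #T)
    (hF : Set.InjOn F T) :
    ∃ p ∈ T, ∃ q ∈ T, ∃ r ∈ T, ∃ u w,
      F q u = F p u ∧ F r u ≠ F p u ∧ F r w = F p w ∧ F q w ≠ F p w := by
  obtain ⟨x, hx, y, hy, z, hz, hxy, hxz, hyz⟩ := two_lt_card.mp hT
  have hne {j k} (hj : j ∈ T) (hk : k ∈ T) (h : j ≠ k) : ∃ v, F j v ≠ F k v :=
    Function.ne_iff.mp fun H => h (hF hj hk H)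
  have hBool {β γ : Bool} (h : β ≠ γ) (δ : Bool) : δ = β ∨ δ = γ := by
    cases β <;> cases γ <;> cases δ <;> simp_all
  obtain ⟨u, hu⟩ := hne hx hy hxy
  rcases hBool hu (F z u) with hzu | hzu
  · obtain ⟨w, hw⟩ := hne hx hz hxz
    rcases hBool hw (F y w) with hyw | hyw
    · exact ⟨x, hx, z, hz, y, hy, u, w, hzu, Ne.symm hu, hyw, Ne.symm hw⟩
    · exact ⟨z, hz, x, hx, y, hy, u, w, hzu.symm, hzu ▸ hu.symm, hyw, hw⟩
  · obtain ⟨w, hw⟩ := hne hy hz hyz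
    rcases hBool hw (F x w) with hxw | hxw
    · exact ⟨y, hy, z, hz, x, hx, u, w, hzu, hu, hxw, Ne.symm hw⟩
    · exact ⟨z, hz, y, hy, x, hx, u, w, hzu.symm, hzu ▸ hu, hxw, hw⟩

section Sigmoid

open Real

lemma inv_two_le_sigmoid {x : ℝ} (hx : 0 ≤ x) : 2⁻¹ ≤ sigmoid x :=
  sigmoid_zero ▸ sigmoid_le hx

lemma sigmoid_neg_le_inv {x : ℝ} (hx : 0 ≤ x) : sigmoid (-x) ≤ (x + 2)⁻¹ := by
  rw [sigmoid_def, neg_neg]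
  exact inv_anti₀ (by positivity) (by linarith [add_one_le_exp x])

end Sigmoid

/-- `side n ℓ v` is the direction in which the routes of `ℓ` cross edge `v`: by
`inRoute_iff_side`, the positive route of `ℓ` uses the arc `(v, true)` when it is `true`, and
the negative route uses `(v, false)` otherwise. -/
noncomputable def side (n : ℕ) (ℓ : ZMod n × ZMod n) (v : ZMod n) : Bool :=
  decide (posRoute n ℓ.1 ℓ.2 v)

noncomputable def route (n : ℕ) [NeZero n] (ℓ : ZMod n × ZMod n) (b : Bool) :
    Finset (ZMod n × Bool) :=
  {a | inRoute n ℓ.1 ℓ.2 b a}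

lemma exists_side_eq {n : ℕ} {ℓ : ZMod n × ZMod n} (hℓ : ℓ.1 ≠ ℓ.2) (b : Bool) :
    ∃ v, side n ℓ v = b := by
  cases b
  · exact ⟨ℓ.2, by simp [side, posRoute]⟩
  · exact ⟨ℓ.1, by simpa [side, posRoute] using ZMod.val_pos.mpr (sub_ne_zero.mpr hℓ.symm)⟩

section CycleRoutes

variable {n : ℕ} [NeZero n]

lemma posRoute_swap_iff {o d : ZMod n} (h : o ≠ d) (v : ZMod n) :
    posRoute n d o v ↔ ¬ posRoute n o d v := by
  have hk : d - o ≠ 0 := sub_ne_zero.mpr h.symm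
  unfold posRoute
  rw [show v - d = (v - o) - (d - o) by ring, show o - d = -(d - o) by ring, ZMod.neg_val,
    if_neg hk, not_lt]
  have := (v - o).val_lt
  rcases le_or_gt (d - o).val (v - o).val with hle | hlt
  · rw [ZMod.val_sub hle]; omega
  · have hne : (d - o) - (v - o) ≠ 0 := by
      intro h0; rw [sub_eq_zero] at h0; rw [h0] at hlt; omega
    rw [show (v - o) - (d - o) = -((d - o) - (v - o)) by ring, ZMod.neg_val, if_neg hne,
      ZMod.val_sub hlt.le]
    omega

lemma posRoute_and_not_posRoute_sub_one_iff {o d : ZMod n} (h : o ≠ d) (v : ZMod n) :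
    posRoute n o d v ∧ ¬ posRoute n o d (v - 1) ↔ v = o := by
  have h1 : (1 : ZMod n).val = 1 := ZMod.val_one'' (ZMod.nontrivial_iff.mp (nontrivial_of_ne _ _ h))
  constructor
  · rintro ⟨hv, hv1⟩
    by_contra hvo
    have hx : 1 ≤ (v - o).val :=
      Nat.one_le_iff_ne_zero.mpr ((ZMod.val_ne_zero _).mpr (sub_ne_zero.mpr hvo))
    refine hv1 ?_
    unfold posRoute at hv ⊢
    rw [show v - 1 - o = (v - o) - 1 by ring, ZMod.val_sub (h1 ▸ hx), h1]
    omega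
  · intro hv
    subst hv
    have := (d - v).val_lt
    refine ⟨?_, fun h' => ?_⟩
    · unfold posRoute; simpa using ZMod.val_pos.mpr (sub_ne_zero.mpr h.symm)
    · unfold posRoute at h'
      rw [show v - 1 - v = -1 by ring, ZMod.neg_val', h1, Nat.mod_eq_of_lt (by omega)] at h'
      omega

lemma eq_of_forall_posRoute_iff {o d o' d' : ZMod n} (h : o ≠ d) (h' : o' ≠ d')
    (H : ∀ v, posRoute n o d v ↔ posRoute n o' d' v) : o = o' :=
  ((posRoute_and_not_posRoute_sub_one_iff h o').mp <| by
    rw [H, H]; exact (posRoute_and_not_posRoute_sub_one_iff h' o').mpr rfl).symm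

lemma side_injective {ℓ ℓ' : ZMod n × ZMod n} (hℓ : ℓ.1 ≠ ℓ.2) (hℓ' : ℓ'.1 ≠ ℓ'.2)
    (H : side n ℓ = side n ℓ') : ℓ = ℓ' := by
  have hpos : ∀ v, posRoute n ℓ.1 ℓ.2 v ↔ posRoute n ℓ'.1 ℓ'.2 v := fun v => by
    simpa [side] using congrFun H v
  refine Prod.ext (eq_of_forall_posRoute_iff hℓ hℓ' hpos)
    (eq_of_forall_posRoute_iff hℓ.symm hℓ'.symm fun v => ?_)
  rw [posRoute_swap_iff hℓ, posRoute_swap_iff hℓ', hpos]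

lemma inRoute_iff_side {ℓ : ZMod n × ZMod n} (hℓ : ℓ.1 ≠ ℓ.2) (b : Bool) (a : ZMod n × Bool) :
    inRoute n ℓ.1 ℓ.2 b a ↔ a.2 = b ∧ side n ℓ a.1 = b := by
  cases b
  · simp only [inRoute, side, Bool.false_eq_true, if_false, decide_eq_false_iff_not]
    exact and_congr_right fun _ => posRoute_swap_iff hℓ a.1
  · simp [inRoute, side]

lemma mem_route {ℓ : ZMod n × ZMod n} (hℓ : ℓ.1 ≠ ℓ.2) {b : Bool} {a : ZMod n × Bool} :
    a ∈ route n ℓ b ↔ a.2 = b ∧ side n ℓ a.1 = b := by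
  simp [route, inRoute_iff_side hℓ]

lemma filter_inRoute_eq {L : Finset (ZMod n × ZMod n)} (hL : ∀ ℓ ∈ L, ℓ.1 ≠ ℓ.2)
    (a : ZMod n × Bool) :
    L.filter (fun ℓ => inRoute n ℓ.1 ℓ.2 a.2 a) = {ℓ ∈ L | side n ℓ a.1 = a.2} :=
  filter_congr fun ℓ hℓ => by simp [inRoute_iff_side (hL ℓ hℓ)]

lemma route_injective {ℓ ℓ' : ZMod n × ZMod n} (hℓ : ℓ.1 ≠ ℓ.2) (hℓ' : ℓ'.1 ≠ ℓ'.2)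
    {b b' : Bool} (H : ∀ a, inRoute n ℓ.1 ℓ.2 b a ↔ inRoute n ℓ'.1 ℓ'.2 b' a) :
    ℓ = ℓ' ∧ b = b' := by
  simp only [inRoute_iff_side hℓ, inRoute_iff_side hℓ'] at H
  obtain ⟨v, hv⟩ := exists_side_eq hℓ b
  obtain rfl : b = b' := ((H (v, b)).mp ⟨rfl, hv⟩).1
  refine ⟨side_injective hℓ hℓ' (funext fun v => ?_), rfl⟩
  have := H (v, b)
  revert this
  cases side n ℓ v <;> cases side n ℓ' v <;> cases b <;> simp

lemma routeCost_eq_sum {I : Type} {c : I → ZMod n × Bool → ℝ → ℝ} {od : I → ZMod n × ZMod n}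
    (f : ZMod n × Bool → ℝ) (i : I) (b : Bool) :
    routeCost n c f od i b = ∑ a ∈ route n (od i) b, c i a (f a) := rfl

end CycleRoutes

section Flows

variable {n : ℕ} {I : Type} [MeasurableSpace I] {μ : Measure I}
  {od : I → ZMod n × ZMod n} {σ σ' : I → Bool}

noncomputable def netSwitch (μ : Measure I) (od : I → ZMod n × ZMod n) (σ σ' : I → Bool)
    (ℓ : ZMod n × ZMod n) : ℝ :=
  μ.real {i | od i = ℓ ∧ σ' i = true} - μ.real {i | od i = ℓ ∧ σ i = true}

noncomputable def signedFlowChange (μ : Measure I) (n : ℕ) (od : I → ZMod n × ZMod n)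
    (σ σ' : I → Bool) (a : ZMod n × Bool) : ℝ :=
  if a.2 then flow μ n od σ' a - flow μ n od σ a else flow μ n od σ a - flow μ n od σ' a

lemma netSwitch_swap (ℓ : ZMod n × ZMod n) : netSwitch μ od σ' σ ℓ = -netSwitch μ od σ σ' ℓ :=
  (neg_sub _ _).symm

lemma signedFlowChange_swap (a : ZMod n × Bool) :
    signedFlowChange μ n od σ' σ a = -signedFlowChange μ n od σ σ' a := by
  unfold signedFlowChange; split_ifs <;> ring

lemma exists_switch_of_netSwitch_pos [IsFiniteMeasure μ] {ℓ : ZMod n × ZMod n}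
    (h : 0 < netSwitch μ od σ σ' ℓ) : ∃ i, od i = ℓ ∧ σ i = false ∧ σ' i = true := by
  by_contra! H
  refine h.not_ge (sub_nonpos.mpr (measureReal_mono fun i ⟨hi, hσ'⟩ => ⟨hi, ?_⟩))
  by_contra hσ
  exact H i hi (by simpa using hσ) hσ'

variable [NeZero n]

lemma measurableSet_od_eq_and (hod : ∀ i, (od i).1 ≠ (od i).2)
    (hσ : ∀ a, MeasurableSet {i | inRoute n (od i).1 (od i).2 (σ i) a})
    {ℓ : ZMod n × ZMod n} (hℓ : ℓ.1 ≠ ℓ.2) (b : Bool) :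
    MeasurableSet {i | od i = ℓ ∧ σ i = b} := by
  have : {i | od i = ℓ ∧ σ i = b} =
      ⋂ a, {i | inRoute n (od i).1 (od i).2 (σ i) a ↔ inRoute n ℓ.1 ℓ.2 b a} := by
    ext i
    simp only [Set.mem_ofPred_eq, Set.mem_iInter]
    exact ⟨fun ⟨hi, hb⟩ a => hi ▸ hb ▸ Iff.rfl, fun H => route_injective (hod i) hℓ H⟩
  rw [this]
  refine MeasurableSet.iInter fun a => ?_
  by_cases ha : inRoute n ℓ.1 ℓ.2 b a
  · simpa [ha] using hσ a
  · convert (hσ a).compl using 1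
    ext i
    simp [ha]

variable [IsFiniteMeasure μ] {L : Finset (ZMod n × ZMod n)}

lemma flow_eq_sum (hL : ∀ ℓ ∈ L, ℓ.1 ≠ ℓ.2) (hod : ∀ i, od i ∈ L)
    (hσ : ∀ a, MeasurableSet {i | inRoute n (od i).1 (od i).2 (σ i) a}) (a : ZMod n × Bool) :
    flow μ n od σ a = ∑ ℓ ∈ L with side n ℓ a.1 = a.2, μ.real {i | od i = ℓ ∧ σ i = a.2} := by
  have hset : {i | inRoute n (od i).1 (od i).2 (σ i) a} =
      ⋃ ℓ ∈ L.filter (side n · a.1 = a.2), {i | od i = ℓ ∧ σ i = a.2} := by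
    ext i
    simp only [Set.mem_ofPred_eq, Set.mem_iUnion, mem_filter, inRoute_iff_side (hL _ (hod i)),
      exists_prop]
    constructor
    · rintro ⟨hb, hside⟩
      exact ⟨od i, ⟨hod i, hb ▸ hside⟩, rfl, hb.symm⟩
    · rintro ⟨ℓ, ⟨-, hside⟩, rfl, hb⟩
      exact ⟨hb.symm, hb ▸ hside⟩
  rw [flow, ← measureReal_def, hset, measureReal_biUnion_finset]
  · intro ℓ _ ℓ' _ hne
    exact Set.disjoint_left.mpr fun i hi hi' => hne (hi.1.symm.trans hi'.1)
  · intro ℓ hℓ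
    exact measurableSet_od_eq_and (fun i => hL _ (hod i)) hσ (hL ℓ (mem_filter.mp hℓ).1) _

lemma measureReal_od_eq_and_true_add_false (hod : ∀ i, (od i).1 ≠ (od i).2)
    (hσ : ∀ a, MeasurableSet {i | inRoute n (od i).1 (od i).2 (σ i) a})
    {ℓ : ZMod n × ZMod n} (hℓ : ℓ.1 ≠ ℓ.2) :
    μ.real {i | od i = ℓ ∧ σ i = true} + μ.real {i | od i = ℓ ∧ σ i = false} =
      μ.real {i | od i = ℓ} := by
  rw [← measureReal_union _ (measurableSet_od_eq_and hod hσ hℓ false)]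
  · congr 1
    ext i
    by_cases h : σ i <;> simp [h]
  · exact Set.disjoint_left.mpr fun i hi hi' => by simp_all

lemma signedFlowChange_eq_sum (hL : ∀ ℓ ∈ L, ℓ.1 ≠ ℓ.2) (hod : ∀ i, od i ∈ L)
    (hσ : ∀ a, MeasurableSet {i | inRoute n (od i).1 (od i).2 (σ i) a})
    (hσ' : ∀ a, MeasurableSet {i | inRoute n (od i).1 (od i).2 (σ' i) a}) (a : ZMod n × Bool) :
    signedFlowChange μ n od σ σ' a = ∑ ℓ ∈ L with side n ℓ a.1 = a.2, netSwitch μ od σ σ' ℓ := by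
  rw [signedFlowChange, flow_eq_sum hL hod hσ, flow_eq_sum hL hod hσ', ← sum_sub_distrib,
    ← sum_sub_distrib]
  obtain ⟨v, _ | _⟩ := a
  · refine sum_congr rfl fun ℓ hℓ => ?_
    have hℓ := hL ℓ (mem_filter.mp hℓ).1
    have h := measureReal_od_eq_and_true_add_false (μ := μ) (fun i => hL _ (hod i)) hσ hℓ
    have h' := measureReal_od_eq_and_true_add_false (μ := μ) (fun i => hL _ (hod i)) hσ' hℓ
    simp only [netSwitch]
    linarith
  · rfl

end Flows

section Uniqueness

variable {n : ℕ} [NeZero n] {I : Type} [MeasurableSpace I] {μ : Measure I}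
  {od : I → ZMod n × ZMod n} {c : I → ZMod n × Bool → ℝ → ℝ} {σ σ' : I → Bool}

lemma false_of_netSwitch_pos [IsFiniteMeasure μ] (hE : IsEquilibrium μ n od c σ)
    (hE' : IsEquilibrium μ n od c σ') (hc : ∀ i a, StrictMono (c i a))
    (hod : ∀ i, (od i).1 ≠ (od i).2) {ℓ : ZMod n × ZMod n} (ht : 0 < netSwitch μ od σ σ' ℓ)
    (hnonneg : ∀ a, side n ℓ a.1 = a.2 → 0 ≤ signedFlowChange μ n od σ σ' a)
    (hpos : ∃ a, side n ℓ a.1 = a.2 ∧ 0 < signedFlowChange μ n od σ σ' a) : False := by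
  obtain ⟨i, rfl, hσi, hσ'i⟩ := exists_switch_of_netSwitch_pos ht
  have hroute {b : Bool} {a} (ha : a ∈ route n (od i) b) : side n (od i) a.1 = a.2 ∧ a.2 = b := by
    obtain ⟨rfl, h⟩ := (mem_route (hod i)).mp ha; exact ⟨h, rfl⟩
  set f := flow μ n od σ
  set f' := flow μ n od σ'
  have hup : ∀ a ∈ route n (od i) true, f a ≤ f' a := fun a ha => by
    have := hnonneg a (hroute ha).1
    simp only [signedFlowChange, (hroute ha).2, if_true] at this
    linarith
  have hdown : ∀ a ∈ route n (od i) false, f' a ≤ f a := fun a ha => by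
    have := hnonneg a (hroute ha).1
    simp only [signedFlowChange, (hroute ha).2, Bool.false_eq_true, if_false] at this
    linarith
  -- user `i` moved from route `false` to route `true`; writing `C g b` for its cost of route `b`
  -- under flows `g`: `C f false ≤ C f true ≤ C f' true ≤ C f' false ≤ C f false`, one step strict
  have h1 := hσi ▸ hE i true
  have h2 := hσ'i ▸ hE' i false
  have h3 : routeCost n c f od i true ≤ routeCost n c f' od i true :=
    sum_le_sum fun a ha => (hc i a).monotone (hup a ha)
  have h4 : routeCost n c f' od i false ≤ routeCost n c f od i false :=
    sum_le_sum fun a ha => (hc i a).monotone (hdown a ha)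
  obtain ⟨⟨v, b⟩, hside, hlt⟩ := hpos
  have hmem : (v, b) ∈ route n (od i) b := (mem_route (hod i)).mpr ⟨rfl, hside⟩
  cases b
  · have : routeCost n c f' od i false < routeCost n c f od i false :=
      sum_lt_sum (fun a ha => (hc i a).monotone (hdown a ha))
        ⟨_, hmem, hc i _ (by simp [signedFlowChange] at hlt; linarith)⟩
    linarith
  · have : routeCost n c f od i true < routeCost n c f' od i true :=
      sum_lt_sum (fun a ha => (hc i a).monotone (hup a ha))
        ⟨_, hmem, hc i _ (by simp [signedFlowChange] at hlt; linarith)⟩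
    linarith

theorem uniquenessProperty_of_card_le_two {L : Finset (ZMod n × ZMod n)}
    (hL : ∀ ℓ ∈ L, ℓ.1 ≠ ℓ.2) (hcov : ∀ a : ZMod n × Bool, #{ℓ ∈ L | side n ℓ a.1 = a.2} ≤ 2) :
    UniquenessProperty n L := by
  intro I _ μ _ od hod c hc _ _ σ σ' hσ hσ' hE hE' a
  have hodne i : (od i).1 ≠ (od i).2 := hL _ (hod i)
  have hΔ := signedFlowChange_eq_sum (μ := μ) hL hod hσ hσ'
  rcases sum_eq_zero_or_exists_signed (fun ℓ (a : ZMod n × Bool) => side n ℓ a.1 = a.2)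
    (netSwitch μ od σ σ') L hcov with h0 | ⟨ℓ, -, hnonneg, hpos⟩
  · have := hΔ a ▸ h0 a
    unfold signedFlowChange at this
    split_ifs at this <;> linarith
  simp only [← hΔ] at hnonneg hpos
  obtain ⟨a₀, ha₀, hpos₀⟩ := hpos
  rcases lt_or_gt_of_ne (left_ne_zero_of_mul hpos₀.ne') with hneg | hpos'
  · refine false_of_netSwitch_pos hE' hE hc hodne (ℓ := ℓ) (by rw [netSwitch_swap]; linarith)
      (fun a ha => ?_) ⟨a₀, ha₀, ?_⟩ |>.elim
    · rw [signedFlowChange_swap]; nlinarith [hnonneg a ha]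
    · rw [signedFlowChange_swap]; nlinarith
  · refine false_of_netSwitch_pos hE hE' hc hodne hpos' (fun a ha => ?_) ⟨a₀, ha₀, ?_⟩ |>.elim
    · nlinarith [hnonneg a ha]
    · nlinarith

end Uniqueness

section Counterexample

open Real

variable {n : ℕ} {I : Type}

/-- A route has at most `2 n` arcs. So when user `i` is on the route through its special arc
`α i`, carrying flow `θ i - 1/2`, that route costs at most `1/4 + 1/4`, and the other route at
least `1/2`; when it is on the other route and `α i` carries `θ i + 1/2`, its route costs at
most `2 n` and the one through `α i` at least `2 n`. -/
noncomputable def gadgetCost (n : ℕ) (α : I → ZMod n × Bool) (θ : I → ℝ) (i : I)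
    (a : ZMod n × Bool) (x : ℝ) : ℝ :=
  if a = α i then 4 * n * sigmoid (32 * n * (x - θ i))
  else if a.2 = (α i).2 then sigmoid x / (8 * n) else sigmoid x

lemma gadgetCost_continuous (α : I → ZMod n × Bool) (θ : I → ℝ) (i : I) (a : ZMod n × Bool) :
    Continuous (gadgetCost n α θ i a) := by
  unfold gadgetCost
  split_ifs <;> fun_prop

lemma gadgetCost_nonneg (α : I → ZMod n × Bool) (θ : I → ℝ) (i : I) (a : ZMod n × Bool)
    (x : ℝ) : 0 ≤ gadgetCost n α θ i a x := by
  unfold gadgetCost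
  split_ifs
  · exact mul_nonneg (by positivity) (sigmoid_nonneg _)
  · exact div_nonneg (sigmoid_nonneg _) (by positivity)
  · exact sigmoid_nonneg _

variable [NeZero n]

lemma sum_le_two_mul_of_le {s : Finset (ZMod n × Bool)} {g : ZMod n × Bool → ℝ} {B : ℝ}
    (hB : 0 ≤ B) (h : ∀ a ∈ s, g a ≤ B) : ∑ a ∈ s, g a ≤ 2 * n * B := by
  have hcard : (#s : ℝ) ≤ 2 * n := by
    have := card_le_univ s
    rw [Fintype.card_prod, ZMod.card, Fintype.card_bool] at this
    exact_mod_cast this.trans_eq (mul_comm _ _)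
  calc ∑ a ∈ s, g a ≤ #s • B := sum_le_card_nsmul _ _ _ h
    _ ≤ 2 * n * B := by rw [nsmul_eq_mul]; gcongr

lemma gadgetCost_strictMono (α : I → ZMod n × Bool) (θ : I → ℝ) (i : I) (a : ZMod n × Bool) :
    StrictMono (gadgetCost n α θ i a) := by
  have hn : (0 : ℝ) < n := Nat.cast_pos.mpr (NeZero.pos n)
  unfold gadgetCost
  split_ifs
  · refine (sigmoid_strictMono.comp fun x y hxy => ?_).const_mul (by positivity)
    gcongr
  · exact sigmoid_strictMono.div_const (by positivity)
  · exact sigmoid_strictMono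

lemma routeCost_gadgetCost_le_of_uses_special {od : I → ZMod n × ZMod n}
    {α : I → ZMod n × Bool} {θ : I → ℝ} {i : I} (hod : (od i).1 ≠ (od i).2)
    (hα : side n (od i) (α i).1 = (α i).2) {f : ZMod n × Bool → ℝ} (hf0 : ∀ a, 0 ≤ f a)
    {b : Bool} (hb : (α i).2 = b) (hf : f (α i) = θ i - 2⁻¹) :
    routeCost n (gadgetCost n α θ) f od i b ≤ routeCost n (gadgetCost n α θ) f od i (!b) := by
  have hn : (0 : ℝ) < n := Nat.cast_pos.mpr (NeZero.pos n)
  have hcα : gadgetCost n α θ i (α i) (f (α i)) ≤ 4⁻¹ := by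
    rw [gadgetCost, if_pos rfl, hf, show 32 * (n : ℝ) * (θ i - 2⁻¹ - θ i) = -(16 * n) by ring]
    calc 4 * (n : ℝ) * sigmoid (-(16 * n)) ≤ 4 * n * (16 * (n : ℝ) + 2)⁻¹ := by
          gcongr; exact sigmoid_neg_le_inv (by positivity)
      _ ≤ 4⁻¹ := by rw [← div_eq_mul_inv, div_le_iff₀ (by positivity)]; linarith
  have hrest : ∑ a ∈ (route n (od i) b).erase (α i), gadgetCost n α θ i a (f a) ≤ 4⁻¹ := by
    refine (sum_le_two_mul_of_le (B := (8 * (n : ℝ))⁻¹) (by positivity) fun a ha => ?_).trans_eq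
      (by field_simp; norm_num)
    obtain ⟨hne, ha⟩ := mem_erase.mp ha
    rw [gadgetCost, if_neg hne, if_pos (((mem_route hod).mp ha).1.trans hb.symm), div_eq_mul_inv]
    exact mul_le_of_le_one_left (by positivity) (sigmoid_le_one _)
  obtain ⟨v, hv⟩ := exists_side_eq hod (!b)
  have hv_cost : 2⁻¹ ≤ gadgetCost n α θ i (v, !b) (f (v, !b)) := by
    have hne : (!b) ≠ (α i).2 := by rw [hb]; exact Bool.not_ne_self b
    rw [gadgetCost, if_neg (fun h => hne (congrArg Prod.snd h)), if_neg hne]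
    exact inv_two_le_sigmoid (hf0 _)
  rw [routeCost_eq_sum, routeCost_eq_sum,
    ← add_sum_erase _ _ ((mem_route hod).mpr ⟨hb, hb ▸ hα⟩)]
  calc _ ≤ (2⁻¹ : ℝ) := by linarith
    _ ≤ _ := hv_cost.trans (single_le_sum (fun a _ => gadgetCost_nonneg α θ i a _)
        ((mem_route hod).mpr ⟨rfl, hv⟩))

lemma routeCost_gadgetCost_le_of_avoids_special {od : I → ZMod n × ZMod n}
    {α : I → ZMod n × Bool} {θ : I → ℝ} {i : I} (hod : (od i).1 ≠ (od i).2)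
    (hα : side n (od i) (α i).1 = (α i).2) {f : ZMod n × Bool → ℝ} {b : Bool}
    (hb : (α i).2 = !b) (hf : f (α i) = θ i + 2⁻¹) :
    routeCost n (gadgetCost n α θ) f od i b ≤ routeCost n (gadgetCost n α θ) f od i (!b) := by
  have hn : (0 : ℝ) < n := Nat.cast_pos.mpr (NeZero.pos n)
  rw [routeCost_eq_sum, routeCost_eq_sum]
  calc ∑ a ∈ route n (od i) b, gadgetCost n α θ i a (f a) ≤ 2 * n * 1 := by
        refine sum_le_two_mul_of_le zero_le_one fun a ha => ?_
        have hne : a.2 ≠ (α i).2 := by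
          rw [((mem_route hod).mp ha).1, hb]; exact (Bool.not_ne_self b).symm
        rw [gadgetCost, if_neg (fun h => hne (congrArg Prod.snd h)), if_neg hne]
        exact sigmoid_le_one _
    _ ≤ gadgetCost n α θ i (α i) (f (α i)) := by
        rw [gadgetCost, if_pos rfl, hf, show 32 * (n : ℝ) * (θ i + 2⁻¹ - θ i) = 16 * n by ring]
        nlinarith [inv_two_le_sigmoid (x := 16 * n) (by positivity)]
    _ ≤ ∑ a ∈ route n (od i) (!b), gadgetCost n α θ i a (f a) :=
        single_le_sum (fun a _ => gadgetCost_nonneg α θ i a _)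
          ((mem_route hod).mpr ⟨hb, hb ▸ hα⟩)

lemma isEquilibrium_gadgetCost [MeasurableSpace I] {μ : Measure I} {od : I → ZMod n × ZMod n}
    (hod : ∀ i, (od i).1 ≠ (od i).2) {α : I → ZMod n × Bool} {θ : I → ℝ}
    (hα : ∀ i, side n (od i) (α i).1 = (α i).2) {τ : I → Bool}
    (hflow : ∀ i, flow μ n od τ (α i) = θ i + if (α i).2 = τ i then -2⁻¹ else 2⁻¹) :
    IsEquilibrium μ n od (gadgetCost n α θ) τ := by
  intro i b
  obtain rfl | rfl : b = τ i ∨ b = !τ i := by cases b <;> cases τ i <;> simp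
  · exact le_rfl
  have hf := hflow i
  by_cases hb : (α i).2 = τ i
  · rw [if_pos hb, ← sub_eq_add_neg] at hf
    exact routeCost_gadgetCost_le_of_uses_special (hod i) (hα i)
      (fun _ => ENNReal.toReal_nonneg) hb hf
  · rw [if_neg hb] at hf
    exact routeCost_gadgetCost_le_of_avoids_special (hod i) (hα i) (Bool.eq_not_iff.mpr hb) hf

open scoped NNReal in
theorem not_uniquenessProperty_of_pivot {L : Finset (ZMod n × ZMod n)} (hL : ∀ ℓ ∈ L, ℓ.1 ≠ ℓ.2)
    {p q r : ZMod n × ZMod n} (hp : p ∈ L) (hq : q ∈ L) (hr : r ∈ L) {s : ZMod n × Bool}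
    (hps : side n p s.1 = s.2) (hqs : side n q s.1 = s.2) (hrs : side n r s.1 = s.2) {u w : ZMod n}
    (hqu : side n q u = side n p u) (hru : side n r u ≠ side n p u)
    (hrw : side n r w = side n p w) (hqw : side n q w ≠ side n p w) :
    ¬ UniquenessProperty n L := by
  intro hU
  obtain ⟨v, b⟩ := s
  rw [← Bool.eq_not_iff] at hru hqw
  let od : Fin 3 → ZMod n × ZMod n := ![p, q, r]
  let α : Fin 3 → ZMod n × Bool := ![(v, b), (u, side n p u), (w, side n p w)]
  let θ : Fin 3 → ℝ := ![7 / 2, 5 / 2, 5 / 2]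
  let σ : Fin 3 → Bool := ![b, !b, !b]
  let μ : Measure (Fin 3) := ∑ j, (![3, 2, 2] j : ℝ≥0) • Measure.dirac j
  have hod : ∀ j, od j ∈ L := by intro j; fin_cases j <;> assumption
  have hα : ∀ j, side n (od j) (α j).1 = (α j).2 := by
    intro j; fin_cases j <;> simp_all [od, α]
  -- in both profiles the special arc of each user carries `θ j - 1/2` exactly when it is used
  have hflow : ∀ τ, (τ = σ ∨ τ = (!σ ·)) →
      ∀ j, flow μ n od τ (α j) = θ j + if (α j).2 = τ j then -2⁻¹ else 2⁻¹ := by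
    rintro τ (rfl | rfl) j <;> fin_cases j <;>
      simp [flow, μ, od, α, θ, σ, Fin.sum_univ_three, Set.indicator, inRoute_iff_side (hL _ hp),
        inRoute_iff_side (hL _ hq), inRoute_iff_side (hL _ hr), hps, hqs, hrs, hqu, hru, hrw, hqw] <;>
      obtain hu | hu := Bool.eq_false_or_eq_true (side n p u) <;>
      obtain hw | hw := Bool.eq_false_or_eq_true (side n p w) <;>
      obtain hb | hb := Bool.eq_false_or_eq_true b <;> norm_num [hu, hw, hb]
  have hE (τ) (hτ : τ = σ ∨ τ = (!σ ·)) : IsEquilibrium μ n od (gadgetCost n α θ) τ :=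
    isEquilibrium_gadgetCost (fun j => hL _ (hod j)) hα (hflow τ hτ)
  have h := hU (Fin 3) _ μ inferInstance od hod _ (gadgetCost_strictMono α θ)
    (gadgetCost_continuous α θ) (gadgetCost_nonneg α θ) σ (!σ ·) (fun _ => .of_discrete)
    (fun _ => .of_discrete) (hE σ (.inl rfl)) (hE _ (.inr rfl)) (α 0)
  rw [hflow σ (.inl rfl), hflow _ (.inr rfl)] at h
  norm_num [α, σ] at h

theorem card_le_two_of_uniquenessProperty {L : Finset (ZMod n × ZMod n)}
    (hL : ∀ ℓ ∈ L, ℓ.1 ≠ ℓ.2) (hU : UniquenessProperty n L) (a : ZMod n × Bool) :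
    #{ℓ ∈ L | side n ℓ a.1 = a.2} ≤ 2 := by
  by_contra! h
  have hT : ∀ ℓ ∈ {ℓ ∈ L | side n ℓ a.1 = a.2}, ℓ ∈ L ∧ side n ℓ a.1 = a.2 :=
    fun _ => mem_filter.mp
  obtain ⟨p, hp, q, hq, r, hr, u, w, hqu, hru, hrw, hqw⟩ := exists_pivot (side n) h
    fun ℓ hℓ ℓ' hℓ' => side_injective (hL _ (hT ℓ hℓ).1) (hL _ (hT ℓ' hℓ').1)
  exact not_uniquenessProperty_of_pivot hL (hT p hp).1 (hT q hq).1 (hT r hr).1 (hT p hp).2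
    (hT q hq).2 (hT r hr).2 hqu hru hrw hqw hU

end Counterexample

theorem uniquenessProperty_iff_atMostTwoRoutes_general (n : ℕ) [NeZero n]
    (L : Finset (ZMod n × ZMod n)) (hL : ∀ ℓ ∈ L, ℓ.1 ≠ ℓ.2) :
    UniquenessProperty n L ↔
      ∀ a : ZMod n × Bool, (L.filter (fun ℓ => inRoute n ℓ.1 ℓ.2 a.2 a)).card ≤ 2 := by
  simp only [filter_inRoute_eq hL]
  exact ⟨card_le_two_of_uniquenessProperty hL, uniquenessProperty_of_card_le_two hL⟩

/-- For a cycle supply graph and a simple demand digraph, the pair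
`(G, H)` has the uniqueness property iff each arc of the directed version of the cycle
is contained in at most two routes. -/
theorem uniquenessProperty_iff_atMostTwoRoutes (n : ℕ) [NeZero n] (hn : 3 ≤ n)
    (L : Finset (ZMod n × ZMod n)) (hL : ∀ ℓ ∈ L, ℓ.1 ≠ ℓ.2) :
    UniquenessProperty n L ↔
      ∀ a : ZMod n × Bool, (L.filter (fun ℓ => inRoute n ℓ.1 ℓ.2 a.2 a)).card ≤ 2 :=
  uniquenessProperty_iff_atMostTwoRoutes_general n L hL
end
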